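/- Fix ε ∈ (0, 1/8]. Let P : [1,∞) → ℝ be continuous, strictly positive, and strictly decreasing, and suppose P satisfies the reflection equation for ε. Then ∫_ε^{1/2} P(1+s) ds ≤ 1, and moreover ∫_ε^{1} P(1+s) ds ≤ 3. -/

import Mathlib

/-!
At `x = 1` the reflection equation reads `P(1+ε) - ∫₀¹ s P(2+ε-s) ds + 1/2 = P(1)`, so, `P` being
decreasing, `∫₀¹ s P(2+ε-s) ds ≤ 1/2`. Keeping only `s ∈ [1/2, 1]`, where the weight is at least
`1/2`, bounds the integral of `P(1+·)` over `[ε, 1/2+ε]` by `1`. For the second bound, a decreasing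
function has a smaller mean over `[1/2, 1]` than over `[ε, 1/2]`, so
`∫_{1/2}^1 P(1+s) ds ≤ (1/2) / (1/2 - ε) ≤ 4/3`.
-/

noncomputable section

/-- `P` satisfies the reflection equation for `ε`: for every x ≥ 1,
(1/x³)·P(2 + ε − 1/x) − (1/x)·∫₀^{1/x} s·P(2 + ε − s) ds + 1/(2x³) = P(x). -/
def SatisfiesReflectionEq (ε : ℝ) (P : ℝ → ℝ) : Prop :=
  ∀ x : ℝ, 1 ≤ x →
    (1 / x ^ 3) * P (2 + ε - 1 / x)
      - (1 / x) * (∫ s in (0:ℝ)..(1 / x), s * P (2 + ε - s))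
      + 1 / (2 * x ^ 3) = P x

open Set MeasureTheory intervalIntegral

theorem AntitoneOn.intervalIntegrable_of_Ici {f : ℝ → ℝ} {c a b : ℝ} (hf : AntitoneOn f (Ici c))
    (ha : c ≤ a) (hb : c ≤ b) : IntervalIntegrable f volume a b :=
  (hf.mono fun _ hx => (le_min ha hb).trans hx.1).intervalIntegrable

theorem AntitoneOn.comp_const_add {f : ℝ → ℝ} {c : ℝ} (hf : AntitoneOn f (Ici c)) (a : ℝ) :
    AntitoneOn (fun s => f (a + s)) (Ici (c - a)) := fun x hx y hy hxy =>
  hf (show c ≤ a + x by linarith [mem_Ici.1 hx]) (show c ≤ a + y by linarith [mem_Ici.1 hy])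
    (by linarith)

theorem AntitoneOn.sub_mul_integral_le_sub_mul_integral {f : ℝ → ℝ} {a m b : ℝ}
    (hf : AntitoneOn f (Icc a b)) (ham : a ≤ m) (hmb : m ≤ b) :
    (m - a) * ∫ x in m..b, f x ≤ (b - m) * ∫ x in a..m, f x := by
  have hleft : (m - a) * f m ≤ ∫ x in a..m, f x := by
    simpa using integral_mono_on (μ := volume) ham intervalIntegrable_const
      (hf.mono (by rw [uIcc_of_le ham]; exact Icc_subset_Icc_right hmb)).intervalIntegrable
      fun x hx => hf ⟨hx.1, hx.2.trans hmb⟩ ⟨ham, hmb⟩ hx.2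
  have hright : ∫ x in m..b, f x ≤ (b - m) * f m := by
    simpa using integral_mono_on (μ := volume) hmb
      (hf.mono (by rw [uIcc_of_le hmb]; exact Icc_subset_Icc_left ham)).intervalIntegrable
      intervalIntegrable_const fun x hx => hf ⟨ham, hmb⟩ ⟨ham.trans hx.1, hx.2⟩ hx.1
  calc (m - a) * ∫ x in m..b, f x ≤ (m - a) * ((b - m) * f m) :=
        mul_le_mul_of_nonneg_left hright (sub_nonneg.2 ham)
    _ = (b - m) * ((m - a) * f m) := by ring
    _ ≤ (b - m) * ∫ x in a..m, f x := mul_le_mul_of_nonneg_left hleft (sub_nonneg.2 hmb)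

theorem mul_integral_le_integral_id_mul {g : ℝ → ℝ} {b c : ℝ} (hc : 0 ≤ c) (hcb : c ≤ b)
    (hg : ∀ s ∈ Icc 0 b, 0 ≤ g s) (hgi : IntervalIntegrable g volume 0 b) :
    c * ∫ s in c..b, g s ≤ ∫ s in 0..b, s * g s := by
  have hsgi : IntervalIntegrable (fun s => s * g s) volume 0 b :=
    hgi.continuousOn_mul continuousOn_id
  have hc_mem : c ∈ uIcc 0 b := by rw [uIcc_of_le (hc.trans hcb)]; exact ⟨hc, hcb⟩
  rw [← integral_add_adjacent_intervals (hsgi.mono_set (uIcc_subset_uIcc_left hc_mem))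
    (hsgi.mono_set (uIcc_subset_uIcc_right hc_mem))]
  have hhead : 0 ≤ ∫ s in 0..c, s * g s :=
    integral_nonneg hc fun s hs => mul_nonneg hs.1 (hg s ⟨hs.1, hs.2.trans hcb⟩)
  have htail : c * ∫ s in c..b, g s ≤ ∫ s in c..b, s * g s := by
    rw [← intervalIntegral.integral_const_mul]
    exact integral_mono_on hcb ((hgi.mono_set (uIcc_subset_uIcc_right hc_mem)).const_mul c)
      (hsgi.mono_set (uIcc_subset_uIcc_right hc_mem))
      fun s hs => mul_le_mul_of_nonneg_right hs.1 (hg s ⟨hc.trans hs.1, hs.2⟩)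
  linarith

namespace SatisfiesReflectionEq

variable {ε : ℝ} {P : ℝ → ℝ}

theorem integral_mul_le_half (hrefl : SatisfiesReflectionEq ε P) (hε : 0 ≤ ε)
    (hanti : AntitoneOn P (Ici 1)) : ∫ s in 0..1, s * P (2 + ε - s) ≤ 1 / 2 := by
  have hx1 := hrefl 1 le_rfl
  have hP : P (1 + ε) ≤ P 1 := hanti (mem_Ici.2 le_rfl) (by simpa) (by simpa)
  norm_num [show 2 + ε - 1 = 1 + ε by ring] at hx1
  linarith

theorem integral_comp_one_add_le_one (hrefl : SatisfiesReflectionEq ε P) (hε0 : 0 ≤ ε)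
    (hε1 : ε ≤ 1 / 2) (hanti : AntitoneOn P (Ici 1)) (hnonneg : ∀ x, 1 ≤ x → 0 ≤ P x) :
    ∫ s in ε..1 / 2, P (1 + s) ≤ 1 := by
  have hreflected_int : IntervalIntegrable (fun s => P (2 + ε - s)) volume 0 1 := by
    refine MonotoneOn.intervalIntegrable fun s hs t ht hst => hanti ?_ ?_ (by linarith)
    all_goals rw [uIcc_of_le zero_le_one] at *; simp only [mem_Ici]; linarith [hs.2, ht.2]
  have hshift_int : IntervalIntegrable (fun s => P (1 + s)) volume ε (1 / 2 + ε) :=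
    (hanti.comp_const_add 1).intervalIntegrable_of_Ici (by linarith) (by linarith)
  have hreflect : ∫ s in 1 / 2..1, P (2 + ε - s) = ∫ s in ε..1 / 2 + ε, P (1 + s) := by
    convert integral_comp_sub_left (fun s => P (1 + s)) (1 + ε) (a := 1 / 2) (b := 1) using 2
    all_goals ring_nf
  calc ∫ s in ε..1 / 2, P (1 + s) ≤ ∫ s in ε..1 / 2 + ε, P (1 + s) :=
        integral_mono_interval le_rfl hε1 (by linarith)
          (ae_restrict_of_forall_mem measurableSet_Ioc fun s hs => hnonneg _ (by linarith [hs.1]))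
          hshift_int
    _ = ∫ s in 1 / 2..1, P (2 + ε - s) := hreflect.symm
    _ ≤ 2 * ∫ s in 0..1, s * P (2 + ε - s) := by
        linarith [mul_integral_le_integral_id_mul (c := 1 / 2) (by norm_num) (by norm_num)
          (fun s hs => hnonneg _ (by linarith [hs.2])) hreflected_int]
    _ ≤ 1 := by linarith [hrefl.integral_mul_le_half hε0 hanti]

end SatisfiesReflectionEq

theorem integral_P_bounded (ε : ℝ) (hε0 : 0 < ε) (hε1 : ε ≤ 1/8) (P : ℝ → ℝ)
    (hpos : ∀ x : ℝ, 1 ≤ x → 0 < P x)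
    (hanti : StrictAntiOn P (Set.Ici (1:ℝ)))
    (hrefl : SatisfiesReflectionEq ε P) :
    (∫ s in ε..(1/2 : ℝ), P (1 + s)) ≤ 1 ∧ (∫ s in ε..(1 : ℝ), P (1 + s)) ≤ 3 := by
  have hnear : ∫ s in ε..(1/2 : ℝ), P (1 + s) ≤ 1 :=
    hrefl.integral_comp_one_add_le_one hε0.le (by linarith) hanti.antitoneOn
      fun x hx => (hpos x hx).le
  have hshift : AntitoneOn (fun s => P (1 + s)) (Ici (1 - 1)) :=
    hanti.antitoneOn.comp_const_add 1
  have hfar : (1/2 - ε) * ∫ s in (1/2 : ℝ)..1, P (1 + s)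
      ≤ (1 - 1/2) * ∫ s in ε..(1/2 : ℝ), P (1 + s) :=
    AntitoneOn.sub_mul_integral_le_sub_mul_integral
      (hshift.mono fun s hs => show (1 : ℝ) - 1 ≤ s by linarith [hs.1]) (by linarith) (by norm_num)
  refine ⟨hnear, ?_⟩
  rw [← integral_add_adjacent_intervals (b := 1/2)
    (hshift.intervalIntegrable_of_Ici (by linarith) (by norm_num))
    (hshift.intervalIntegrable_of_Ici (by norm_num) (by norm_num))]
  nlinarith
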